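/- Let T > 0, let f : [0,T] → ℝ be continuous with 0 ≤ f(t) ≤ 1 for all t, and let g : [0,T] → ℝ be nonnegative and integrable. Suppose that for every t ∈ [0,T] one has f(t) ≤ ∫₀ᵗ g(s) · f(s) · (1 − log f(s)) ds, where the integrand is interpreted as 0 at points where f(s) = 0. Then f(t) = 0 for all t ∈ [0,T]. -/

import Mathlib

open MeasureTheory

lemma mu_nonneg {x : ℝ} (hx : 0 ≤ x) (hx1 : x ≤ 1) : 0 ≤ x * (1 - Real.log x) := by
  apply mul_nonneg hx
  rcases eq_or_lt_of_le hx with h | h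
  · simp [← h]
  · have := Real.log_nonpos hx hx1
    linarith

lemma mu_mono {x y : ℝ} (hx : 0 ≤ x) (hxy : x ≤ y) (hy1 : y ≤ 1) :
    x * (1 - Real.log x) ≤ y * (1 - Real.log y) := by
  rcases eq_or_lt_of_le hx with h | hx0
  · rw [← h, zero_mul]
    exact mu_nonneg (h ▸ hxy) hy1
  · have hmono : MonotoneOn (fun z : ℝ => z * (1 - Real.log z)) (Set.Icc x 1) := by
      apply monotoneOn_of_deriv_nonneg (convex_Icc x 1)
      · apply ContinuousOn.mul continuousOn_id
        apply ContinuousOn.sub continuousOn_const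
        apply Real.continuousOn_log.mono
        intro z hz
        exact ne_of_gt (lt_of_lt_of_le hx0 hz.1)
      · intro z hz
        rw [interior_Icc] at hz
        have hz0 : z ≠ 0 := ne_of_gt (lt_trans hx0 hz.1)
        exact ((hasDerivAt_id z).mul ((hasDerivAt_const z (1:ℝ)).sub
          (Real.hasDerivAt_log hz0))).differentiableAt.differentiableWithinAt
      · intro z hz
        rw [interior_Icc] at hz
        have hz0 : 0 < z := lt_trans hx0 hz.1
        have hd : HasDerivAt (fun z : ℝ => z * (1 - Real.log z))
            (1 * (1 - Real.log z) + z * (0 - z⁻¹)) z :=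
          (hasDerivAt_id z).mul ((hasDerivAt_const z (1:ℝ)).sub (Real.hasDerivAt_log hz0.ne'))
        rw [hd.deriv]
        have : Real.log z ≤ 0 := Real.log_nonpos hz0.le (le_of_lt hz.2)
        field_simp
        linarith
    exact hmono ⟨le_refl x, le_trans hxy hy1⟩ ⟨hxy, hy1⟩ hxy

lemma mu_le_one {x : ℝ} (hx : 0 ≤ x) (hx1 : x ≤ 1) : x * (1 - Real.log x) ≤ 1 := by
  have := mu_mono hx hx1 le_rfl
  simpa using this

theorem osgood_uniqueness (T : ℝ) (hT : 0 < T) (f g : ℝ → ℝ)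
    (hf_cont : ContinuousOn f (Set.Icc 0 T))
    (hf01 : ∀ t ∈ Set.Icc (0 : ℝ) T, 0 ≤ f t ∧ f t ≤ 1)
    (hg_nonneg : ∀ t ∈ Set.Icc (0 : ℝ) T, 0 ≤ g t)
    (hg_int : IntegrableOn g (Set.Icc 0 T))
    (hineq : ∀ t ∈ Set.Icc (0 : ℝ) T,
      f t ≤ ∫ s in Set.Ioc (0 : ℝ) t, g s * (f s * (1 - Real.log (f s)))) :
    ∀ t ∈ Set.Icc (0 : ℝ) T, f t = 0 := by
  classical
  set φ : ℝ → ℝ := fun s => g s * (f s * (1 - Real.log (f s))) with hφdef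
  set F : ℝ → ℝ := fun t => ∫ s in Set.Ioc (0:ℝ) t, φ s with hFdef
  have hfF : ∀ t ∈ Set.Icc (0:ℝ) T, f t ≤ F t := hineq
  have hsub : ∀ {a b : ℝ}, 0 ≤ a → b ≤ T → Set.Ioc a b ⊆ Set.Icc 0 T := by
    intro a b ha hb x hx
    exact ⟨le_of_lt (lt_of_le_of_lt ha hx.1), le_trans hx.2 hb⟩
  have hφ_nonneg : ∀ s ∈ Set.Icc (0:ℝ) T, 0 ≤ φ s := fun s hs =>
    mul_nonneg (hg_nonneg s hs) (mu_nonneg (hf01 s hs).1 (hf01 s hs).2)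
  have hφ_le : ∀ s ∈ Set.Icc (0:ℝ) T, φ s ≤ g s := fun s hs =>
    mul_le_of_le_one_right (hg_nonneg s hs) (mu_le_one (hf01 s hs).1 (hf01 s hs).2)
  have hf_aem : AEMeasurable f (volume.restrict (Set.Icc 0 T)) :=
    hf_cont.aemeasurable measurableSet_Icc
  have hφ_int : IntegrableOn φ (Set.Icc 0 T) := by
    have hlog : AEMeasurable (fun s => Real.log (f s)) (volume.restrict (Set.Icc 0 T)) :=
      Real.measurable_log.comp_aemeasurable hf_aem
    have haesm : AEStronglyMeasurable φ (volume.restrict (Set.Icc 0 T)) :=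
      (hg_int.aestronglyMeasurable.aemeasurable.mul
        (hf_aem.mul (aemeasurable_const.sub hlog))).aestronglyMeasurable
    refine Integrable.mono hg_int haesm ?_
    rw [ae_restrict_iff' measurableSet_Icc]
    filter_upwards with s hs
    rw [Real.norm_eq_abs, Real.norm_eq_abs, abs_of_nonneg (hφ_nonneg s hs),
      abs_of_nonneg (hg_nonneg s hs)]
    exact hφ_le s hs
  have hφ_int' : ∀ {a b : ℝ}, 0 ≤ a → b ≤ T → IntegrableOn φ (Set.Ioc a b) :=
    fun ha hb => hφ_int.mono_set (hsub ha hb)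
  have hsplit : ∀ a b : ℝ, 0 ≤ a → a ≤ b → b ≤ T →
      F b = F a + ∫ s in Set.Ioc a b, φ s := by
    intro a b ha hab hb
    have h1 : IntegrableOn φ (Set.Ioc 0 a) := hφ_int' le_rfl (le_trans hab hb)
    have h2 : IntegrableOn φ (Set.Ioc a b) := hφ_int' ha hb
    show (∫ s in Set.Ioc (0:ℝ) b, φ s) = (∫ s in Set.Ioc (0:ℝ) a, φ s) + _
    rw [← Set.Ioc_union_Ioc_eq_Ioc ha hab,
      setIntegral_union (Set.Ioc_disjoint_Ioc_of_le le_rfl) measurableSet_Ioc h1 h2]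
  have hF0 : F 0 = 0 := by simp [hFdef]
  have hFmono : ∀ a b : ℝ, 0 ≤ a → a ≤ b → b ≤ T → F a ≤ F b := by
    intro a b ha hab hb
    rw [hsplit a b ha hab hb]
    have : 0 ≤ ∫ s in Set.Ioc a b, φ s :=
      setIntegral_nonneg measurableSet_Ioc (fun s hs => hφ_nonneg s (hsub ha hb hs))
    linarith
  have hF_cont : ContinuousOn F (Set.Icc 0 T) :=
    intervalIntegral.continuousOn_primitive hφ_int
  intro t₀ ht₀
  by_contra hft
  have hf0pos : 0 < f t₀ := lt_of_le_of_ne (hf01 t₀ ht₀).1 (Ne.symm hft)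
  have hFt₀ : 0 < F t₀ := lt_of_lt_of_le hf0pos (hfF t₀ ht₀)
  set c : ℝ := min 1 (F t₀) with hc
  have hc0 : 0 < c := lt_min one_pos hFt₀
  have hc1 : c ≤ 1 := min_le_left _ _
  have hlogc : Real.log c ≤ 0 := Real.log_nonpos hc0.le hc1
  obtain ⟨tstar, htstar_mem, htstar⟩ : ∃ x ∈ Set.Icc 0 t₀, F x = c := by
    have h := intermediate_value_Icc ht₀.1 (hF_cont.mono (Set.Icc_subset_Icc le_rfl ht₀.2))
    exact h ⟨by rw [hF0]; exact hc0.le, min_le_right _ _⟩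
  have htstar0 : 0 ≤ tstar := htstar_mem.1
  have htstarT : tstar ≤ T := le_trans htstar_mem.2 ht₀.2
  have step : ∀ x ∈ Set.Icc 0 tstar, ∀ v : ℝ, 0 ≤ v → v ≤ F x →
      ∃ y ∈ Set.Icc 0 x, F y = v := by
    intro x hx v hv hvF
    have hcont : ContinuousOn F (Set.Icc 0 x) :=
      hF_cont.mono (Set.Icc_subset_Icc le_rfl (le_trans hx.2 htstarT))
    exact intermediate_value_Icc hx.1 hcont ⟨by rw [hF0]; exact hv, hvF⟩
  set a : ℕ → ℝ := fun k => c / 2 ^ k with ha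
  have ha_pos : ∀ k, 0 < a k := fun k => div_pos hc0 (by positivity)
  have ha_le : ∀ k, a k ≤ 1 := by
    intro k
    have h2k : (1:ℝ) ≤ 2 ^ k := one_le_pow₀ (by norm_num)
    calc a k ≤ c := by rw [ha]; exact div_le_self hc0.le h2k
    _ ≤ 1 := hc1
  have ha_half : ∀ k, a (k+1) = a k / 2 := by
    intro k
    simp only [ha, pow_succ, div_div]
  let seq : ℕ → ℝ := fun n => Nat.rec tstar
    (fun k x => @dite ℝ (∃ y ∈ Set.Icc 0 x, F y = a (k+1)) (Classical.propDecidable _)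
      (fun h => h.choose) (fun _ => 0)) n
  have hseq0 : seq 0 = tstar := rfl
  have hseq_succ : ∀ k, seq (k+1) =
      @dite ℝ (∃ y ∈ Set.Icc 0 (seq k), F y = a (k+1)) (Classical.propDecidable _)
        (fun h => h.choose) (fun _ => 0) := fun k => rfl
  have key : ∀ k, (seq k ∈ Set.Icc 0 tstar ∧ F (seq k) = a k) →
      (seq (k+1) ∈ Set.Icc 0 tstar ∧ F (seq (k+1)) = a (k+1)) ∧ seq (k+1) ≤ seq k := by
    intro k hk
    obtain ⟨hmem, hFk⟩ := hk
    have hex : ∃ y ∈ Set.Icc 0 (seq k), F y = a (k+1) := by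
      apply step (seq k) hmem (a (k+1)) (ha_pos _).le
      rw [hFk, ha_half]
      linarith [ha_pos k]
    have heq : seq (k+1) = hex.choose := by rw [hseq_succ k, dif_pos hex]
    obtain ⟨hy_mem, hy_F⟩ := hex.choose_spec
    rw [heq]
    exact ⟨⟨⟨hy_mem.1, le_trans hy_mem.2 hmem.2⟩, hy_F⟩, hy_mem.2⟩
  have hP : ∀ k, seq k ∈ Set.Icc 0 tstar ∧ F (seq k) = a k := by
    intro k
    induction k with
    | zero => exact ⟨⟨htstar0, le_rfl⟩, by simpa [ha, hseq0] using htstar⟩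
    | succ k ih => exact (key k ih).1
  have hdec : ∀ k, seq (k+1) ≤ seq k := fun k => (key k (hP k)).2
  have hg_int' : ∀ {x y : ℝ}, 0 ≤ x → y ≤ T → IntegrableOn g (Set.Ioc x y) :=
    fun hx hy => hg_int.mono_set (hsub hx hy)
  have hkey2 : ∀ k : ℕ, 1 / (2 * (1 - Real.log c) * ((k:ℝ)+1)) ≤
      ∫ s in Set.Ioc (seq (k+1)) (seq k), g s := by
    intro k
    have hm1 := hP (k+1)
    have hm0 := hP k
    have hd := hdec k
    have h0k1 : 0 ≤ seq (k+1) := hm1.1.1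
    have hSkT : seq k ≤ T := le_trans hm0.1.2 htstarT
    have hsplit' : F (seq k) - F (seq (k+1)) = ∫ s in Set.Ioc (seq (k+1)) (seq k), φ s := by
      rw [hsplit (seq (k+1)) (seq k) h0k1 hd hSkT]
      ring
    have hbound : (∫ s in Set.Ioc (seq (k+1)) (seq k), φ s) ≤
        ∫ s in Set.Ioc (seq (k+1)) (seq k), g s * (a k * (1 - Real.log (a k))) := by
      apply setIntegral_mono_on (hφ_int' h0k1 hSkT)
        ((hg_int' h0k1 hSkT).mul_const _) measurableSet_Ioc
      intro s hs
      have hsT : s ∈ Set.Icc 0 T := hsub h0k1 hSkT hs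
      have hfs := hf01 s hsT
      have hfsFk : f s ≤ a k := by
        calc f s ≤ F s := hfF s hsT
          _ ≤ F (seq k) := hFmono s (seq k) hsT.1 hs.2 hSkT
          _ = a k := hm0.2
      exact mul_le_mul_of_nonneg_left (mu_mono hfs.1 hfsFk (ha_le k)) (hg_nonneg s hsT)
    have hconst : (∫ s in Set.Ioc (seq (k+1)) (seq k), g s * (a k * (1 - Real.log (a k)))) =
        (∫ s in Set.Ioc (seq (k+1)) (seq k), g s) * (a k * (1 - Real.log (a k))) :=
      integral_mul_const _ _
    set I : ℝ := ∫ s in Set.Ioc (seq (k+1)) (seq k), g s with hI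
    rw [hm0.2, hm1.2] at hsplit'
    rw [hconst] at hbound
    have hmain : a k / 2 ≤ I * (a k * (1 - Real.log (a k))) := by
      have h1 : a (k+1) = a k / 2 := ha_half k
      linarith
    have hlogak : Real.log (a k) = Real.log c - k * Real.log 2 := by
      rw [ha]
      rw [Real.log_div (ne_of_gt hc0) (by positivity), Real.log_pow]
    have hpos : 0 < 1 - Real.log (a k) := by
      have := Real.log_nonpos (ha_pos k).le (ha_le k)
      linarith
    have hB1 : (1:ℝ) ≤ 1 - Real.log c := by linarith
    have hBle : 1 - Real.log (a k) ≤ (1 - Real.log c) * ((k:ℝ)+1) := by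
      have h2 : Real.log 2 ≤ 1 := by
        have := Real.log_two_lt_d9
        linarith
      have hk0 : (0:ℝ) ≤ (k:ℝ) := Nat.cast_nonneg k
      rw [hlogak]
      nlinarith
    have hIbig : 1 / (2 * (1 - Real.log (a k))) ≤ I := by
      rw [div_le_iff₀ (by positivity)]
      nlinarith [ha_pos k]
    calc 1 / (2 * (1 - Real.log c) * ((k:ℝ)+1)) ≤ 1 / (2 * (1 - Real.log (a k))) := by
          apply one_div_le_one_div_of_le (by positivity)
          nlinarith
      _ ≤ I := hIbig
  have hsum : ∀ N : ℕ, (∫ s in Set.Ioc (seq N) tstar, g s) =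
      ∑ k ∈ Finset.range N, ∫ s in Set.Ioc (seq (k+1)) (seq k), g s := by
    intro N
    induction N with
    | zero => simp [hseq0]
    | succ N ih =>
      rw [Finset.sum_range_succ, ← ih]
      have h1 : seq (N+1) ≤ seq N := hdec N
      have h2 : seq N ≤ tstar := (hP N).1.2
      have h0 : 0 ≤ seq (N+1) := (hP (N+1)).1.1
      rw [← Set.Ioc_union_Ioc_eq_Ioc h1 h2,
        setIntegral_union (Set.Ioc_disjoint_Ioc_of_le le_rfl) measurableSet_Ioc
          (hg_int' h0 (le_trans h2 htstarT)) (hg_int' (le_trans h0 h1) htstarT)]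
      ring
  have hbdd : ∀ N : ℕ, (∑ k ∈ Finset.range N, (1 / ((k:ℝ) + 1))) ≤
      (2 * (1 - Real.log c)) * ∫ s in Set.Icc 0 T, g s := by
    intro N
    have hBpos : (0:ℝ) < 2 * (1 - Real.log c) := by linarith
    have h1 : ∑ k ∈ Finset.range N, (1 / (2 * (1 - Real.log c) * ((k:ℝ)+1))) ≤
        ∫ s in Set.Ioc (seq N) tstar, g s := by
      rw [hsum N]
      exact Finset.sum_le_sum fun k _ => hkey2 k
    have h2 : (∫ s in Set.Ioc (seq N) tstar, g s) ≤ ∫ s in Set.Icc 0 T, g s := by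
      apply setIntegral_mono_set hg_int
      · filter_upwards [ae_restrict_mem measurableSet_Icc] with s hs using hg_nonneg s hs
      · exact HasSubset.Subset.eventuallyLE (hsub (hP N).1.1 htstarT)
    have h3 : (∑ k ∈ Finset.range N, (1 / ((k:ℝ) + 1))) =
        (2 * (1 - Real.log c)) * ∑ k ∈ Finset.range N, (1 / (2 * (1 - Real.log c) * ((k:ℝ)+1))) := by
      rw [Finset.mul_sum]
      apply Finset.sum_congr rfl
      intro k _
      have : ((k:ℝ) + 1) ≠ 0 := by positivity
      have : (1 - Real.log c) ≠ 0 := by linarith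
      field_simp
    rw [h3]
    calc (2 * (1 - Real.log c)) * ∑ k ∈ Finset.range N, (1 / (2 * (1 - Real.log c) * ((k:ℝ)+1)))
        ≤ (2 * (1 - Real.log c)) * ∫ s in Set.Ioc (seq N) tstar, g s :=
          mul_le_mul_of_nonneg_left h1 hBpos.le
      _ ≤ _ := mul_le_mul_of_nonneg_left h2 hBpos.le
  obtain ⟨N, hN⟩ := (Real.tendsto_sum_range_one_div_nat_succ_atTop.eventually_gt_atTop
    ((2 * (1 - Real.log c)) * ∫ s in Set.Icc 0 T, g s)).exists
  exact absurd (hbdd N) (not_le.mpr hN)
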